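/- arXiv:2402.15455 — 4 statements merged into one kernel-verified Lean document; each statement's English description precedes it below -/
import Mathlib

section
/- The trivial extension T(R, M) of a ring R by an R-bimodule M is a UQ ring if and only if R is a UQ ring. -/
/-- An element `a` of a ring is quasinilpotent if `1 - a*x` is a unit
for every `x` commuting with `a`. -/
def IsQuasinilpotent {R : Type*} [Ring R] (a : R) : Prop :=
  ∀ x : R, x * a = a * x → IsUnit (1 - a * x)

/-- A ring `R` is a UQ ring if `U(R) = 1 + QN(R)`. -/
def IsUQRing (R : Type*) [Ring R] : Prop :=
  ∀ u : R, IsUnit u ↔ ∃ q : R, IsQuasinilpotent q ∧ u = 1 + q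

/-!
Since `1 + q` is a unit for every quasinilpotent `q`, a ring is UQ exactly when `u - 1` is
quasinilpotent for every unit `u`. Quasinilpotence is reflected by any ring homomorphism that
reflects units: if `x` commutes with `a`, then `f x` commutes with `f a`, so
`f (1 - a * x) = 1 - f a * f x` is a unit. Both `inl : R → T(R, M)` and `fst : T(R, M) → R`
reflect units, because an element of `T(R, M)` is a unit iff its `R`-component is; the first
transports the UQ property from `T(R, M)` down to `R`, the second from `R` up to `T(R, M)`.
-/

section Ring

variable {R S : Type*} [Ring R] [Ring S]

theorem IsQuasinilpotent.isUnit_one_add {q : R} (hq : IsQuasinilpotent q) : IsUnit (1 + q) := by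
  simpa using hq (-1) (by simp)

theorem isUQRing_iff_forall_isUnit :
    IsUQRing R ↔ ∀ u : R, IsUnit u → IsQuasinilpotent (u - 1) := by
  refine ⟨fun h u hu => ?_, fun h u => ⟨fun hu => ⟨u - 1, h u hu, by abel⟩, ?_⟩⟩
  · obtain ⟨q, hq, rfl⟩ := (h u).mp hu
    simpa using hq
  · rintro ⟨q, hq, rfl⟩
    exact hq.isUnit_one_add

theorem IsQuasinilpotent.of_map {F : Type*} [FunLike F R S] [RingHomClass F R S] (f : F)
    [IsLocalHom f] {a : R} (ha : IsQuasinilpotent (f a)) : IsQuasinilpotent a := fun x hx =>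
  IsUnit.of_map f _ <| by
    simpa only [map_sub, map_one, map_mul] using ha (f x) (by rw [← map_mul, hx, map_mul])

end Ring

namespace TrivSqZeroExt

variable (R M : Type*) [Ring R] [AddCommGroup M] [Module R M] [Module Rᵐᵒᵖ M]
  [SMulCommClass R Rᵐᵒᵖ M]

instance isLocalHom_inlHom : IsLocalHom (inlHom R M) :=
  ⟨fun _ h => isUnit_inl_iff.mp h⟩

instance isLocalHom_fstHom : IsLocalHom (fstHom ℕ R M) :=
  ⟨fun _ h => isUnit_iff_isUnit_fst.mpr h⟩

end TrivSqZeroExt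

open TrivSqZeroExt in
theorem trivial_extension_uq (R : Type*) (M : Type*) [Ring R]
    [AddCommGroup M] [Module R M] [Module Rᵐᵒᵖ M] [SMulCommClass R Rᵐᵒᵖ M] :
    IsUQRing (TrivSqZeroExt R M) ↔ IsUQRing R := by
  rw [isUQRing_iff_forall_isUnit, isUQRing_iff_forall_isUnit]
  constructor
  · intro hT u hu
    have hinl : IsQuasinilpotent (inl u - 1 : TrivSqZeroExt R M) := hT _ (isUnit_inl_iff.mpr hu)
    rw [← inl_one, ← inl_sub] at hinl
    exact hinl.of_map (inlHom R M)
  · intro hR u hu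
    have hfst : IsQuasinilpotent (u.fst - 1) := hR _ (isUnit_iff_isUnit_fst.mp hu)
    exact IsQuasinilpotent.of_map (fstHom ℕ R M) (by simpa using hfst)
end

section
/- The formal power series ring R[[x]] is a UQ ring if and only if R is a UQ ring. -/
/-!
The constant coefficient `R⟦X⟧ → R` is a local homomorphism with section `C`. Quasinilpotence
of `a` can be pulled back along a local homomorphism `π` (if `π a` is quasinilpotent, so is `a`)
and along a homomorphism `σ` admitting a left inverse `π` (if `σ a` is, so is `a`). Since a ring is
UQ exactly when `u - 1` is quasinilpotent for every unit `u`, both implications follow by moving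
`u - 1` through `C` and `constantCoeff`.
-/

namespace IsQuasinilpotent

variable {R S : Type*} [Ring R] [Ring S]

theorem isUnit_one_add_s10 {q : R} (hq : IsQuasinilpotent q) : IsUnit (1 + q) := by
  simpa using hq (-1) (by simp)

theorem of_map_of_isLocalHom (π : S →+* R) [IsLocalHom π] {a : S}
    (ha : IsQuasinilpotent (π a)) : IsQuasinilpotent a := fun x hx =>
  (isUnit_map_iff π _).mp <| by simpa using ha (π x) (by simp only [← map_mul, hx])

theorem of_map_of_leftInverse {π : S →+* R} {σ : R →+* S} (h : Function.LeftInverse π σ) {a : R}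
    (ha : IsQuasinilpotent (σ a)) : IsQuasinilpotent a := fun x hx => by
  simpa [h _] using (ha (σ x) (by simp only [← map_mul, hx])).map π

end IsQuasinilpotent

theorem isUQRing_iff {R : Type*} [Ring R] :
    IsUQRing R ↔ ∀ u : R, IsUnit u → IsQuasinilpotent (u - 1) := by
  refine ⟨fun h u hu => ?_, fun h u => ⟨fun hu => ⟨u - 1, h u hu, by abel⟩, ?_⟩⟩
  · obtain ⟨q, hq, rfl⟩ := (h u).mp hu
    simpa using hq
  · rintro ⟨q, hq, rfl⟩
    exact hq.isUnit_one_add_s10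

theorem isUQRing_iff_of_leftInverse {R S : Type*} [Ring R] [Ring S] (π : S →+* R) [IsLocalHom π]
    (σ : R →+* S) (h : Function.LeftInverse π σ) : IsUQRing S ↔ IsUQRing R := by
  simp only [isUQRing_iff]
  refine ⟨fun hS u hu => ?_, fun hR v hv => ?_⟩
  · exact .of_map_of_leftInverse h (by simpa using hS (σ u) (hu.map σ))
  · exact .of_map_of_isLocalHom π (by simpa using hR (π v) (hv.map π))

instance PowerSeries.isLocalHom_constantCoeff {R : Type*} [Ring R] :
    IsLocalHom (PowerSeries.constantCoeff (R := R)) :=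
  ⟨fun _ => PowerSeries.isUnit_iff_constantCoeff.mpr⟩

theorem powerSeries_uq (R : Type*) [Ring R] :
    IsUQRing (PowerSeries R) ↔ IsUQRing R :=
  isUQRing_iff_of_leftInverse PowerSeries.constantCoeff PowerSeries.C PowerSeries.constantCoeff_C
end

section
/- Every UQ ring is Dedekind finite: if R is a UQ ring and a, b ∈ R satisfy ab = 1, then ba = 1. -/
/-!
Suppose `a * b = 1` and put `e = 1 - b * a`. Then `e`, `e * a`, `b * e`, `b * e * a` multiply like
the matrix units `E₁₁, E₁₂, E₂₁, E₂₂`, and `q = e + e * a + b * e` plays the role of the Fibonacci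
matrix `[[1, 1], [1, 0]]`: `1 + q` is a unit and `q * (q - 1) = e + b * e * a` is the identity of
that corner. In a UQ ring `q` is then quasinilpotent, so `1 - q * (q - 1)` is a unit; an idempotent
whose complement is a unit vanishes, hence `e = 0`.
-/

theorem mul_mul_eq_of_mul_eq {M : Type*} [Semigroup M] {a b c : M} (h : a * b = c) (x : M) :
    a * (b * x) = c * x := by
  rw [← mul_assoc, h]

section

variable {R : Type*} [Ring R]

theorem IsUQRing.isQuasinilpotent_of_isUnit_one_add (hR : IsUQRing R) {q : R}
    (hq : IsUnit (1 + q)) : IsQuasinilpotent q := by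
  obtain ⟨w, hw, hqw⟩ := (hR (1 + q)).mp hq
  rwa [add_left_cancel hqw]

theorem IsQuasinilpotent.isUnit_one_sub_mul_sub_one {q : R} (hq : IsQuasinilpotent q) :
    IsUnit (1 - q * (q - 1)) :=
  hq (q - 1) (by noncomm_ring)

theorem IsIdempotentElem.eq_zero_of_isUnit_one_sub {p : R} (hp : IsIdempotentElem p)
    (hu : IsUnit (1 - p)) : p = 0 := by
  simpa using (IsIdempotentElem.iff_eq_one_of_isUnit hu).mp hp.one_sub

theorem isUnit_one_add_of_mul_self_eq_zero {x : R} (hx : x * x = 0) : IsUnit (1 + x) :=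
  IsNilpotent.isUnit_one_add ⟨2, by rw [pow_two, hx]⟩

section OneSidedInverse

variable {a b : R} (hab : a * b = 1)
include hab

theorem mul_one_sub_mul_of_mul_eq_one : a * (1 - b * a) = 0 := by
  rw [mul_sub, mul_one, ← mul_assoc, hab, one_mul, sub_self]

theorem one_sub_mul_mul_of_mul_eq_one : (1 - b * a) * b = 0 := by
  rw [sub_mul, one_mul, mul_assoc, hab, mul_one, sub_self]

theorem isIdempotentElem_one_sub_mul_of_mul_eq_one : IsIdempotentElem (1 - b * a) :=
  IsIdempotentElem.one_sub (by rw [IsIdempotentElem, mul_assoc, mul_mul_eq_of_mul_eq hab, one_mul])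

end OneSidedInverse

section MatrixUnits

variable {a b e : R}

/-- The matrix `[[1, 1], [1, 0]]` written in the matrix units `e, e * a, b * e, b * e * a`. -/
def fibonacciElem (a b e : R) : R := e + e * a + b * e

theorem isUnit_one_add_fibonacciElem (hab : a * b = 1) (hae : a * e = 0) (heb : e * b = 0)
    (he : IsIdempotentElem e) : IsUnit (1 + fibonacciElem a b e) := by
  have hprod : (1 + e * a) * (1 + b * e) = 1 + fibonacciElem a b e := by
    simp only [fibonacciElem, mul_add, add_mul, mul_one, one_mul, mul_assoc,
      mul_mul_eq_of_mul_eq hab, he.eq]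
    abel
  rw [← hprod]
  refine (isUnit_one_add_of_mul_self_eq_zero ?_).mul (isUnit_one_add_of_mul_self_eq_zero ?_)
  · rw [mul_assoc, mul_mul_eq_of_mul_eq hae, zero_mul, mul_zero]
  · rw [mul_assoc, mul_mul_eq_of_mul_eq heb, zero_mul, mul_zero]

theorem fibonacciElem_mul_sub_one (hab : a * b = 1) (hae : a * e = 0) (heb : e * b = 0)
    (he : IsIdempotentElem e) : fibonacciElem a b e * (fibonacciElem a b e - 1) = e + b * e * a := by
  simp only [fibonacciElem, mul_add, add_mul, mul_sub, mul_one, one_mul, zero_mul, mul_zero,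
    mul_assoc, hae, he.eq, mul_mul_eq_of_mul_eq hab, mul_mul_eq_of_mul_eq hae,
    mul_mul_eq_of_mul_eq heb, mul_mul_eq_of_mul_eq he.eq]
  abel

theorem isIdempotentElem_add_mul_mul (hab : a * b = 1) (hae : a * e = 0) (heb : e * b = 0)
    (he : IsIdempotentElem e) : IsIdempotentElem (e + b * e * a) := by
  simp only [IsIdempotentElem, mul_add, add_mul, one_mul, zero_mul, mul_zero, add_zero, zero_add,
    mul_assoc, hae, he.eq, mul_mul_eq_of_mul_eq hab, mul_mul_eq_of_mul_eq heb,
    mul_mul_eq_of_mul_eq he.eq]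

end MatrixUnits

end

theorem uq_dedekind_finite {R : Type*} [Ring R] (hR : IsUQRing R)
    (a b : R) (hab : a * b = 1) : b * a = 1 := by
  set e := 1 - b * a
  have hae : a * e = 0 := mul_one_sub_mul_of_mul_eq_one hab
  have heb : e * b = 0 := one_sub_mul_mul_of_mul_eq_one hab
  have he : IsIdempotentElem e := isIdempotentElem_one_sub_mul_of_mul_eq_one hab
  have hq : IsQuasinilpotent (fibonacciElem a b e) :=
    hR.isQuasinilpotent_of_isUnit_one_add (isUnit_one_add_fibonacciElem hab hae heb he)
  have hp : e + b * e * a = 0 := by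
    refine (isIdempotentElem_add_mul_mul hab hae heb he).eq_zero_of_isUnit_one_sub ?_
    rw [← fibonacciElem_mul_sub_one hab hae heb he]
    exact hq.isUnit_one_sub_mul_sub_one
  have he0 : e = 0 :=
    calc e = e * (e + b * e * a) := by
          rw [mul_add, he.eq, ← mul_assoc, ← mul_assoc, heb, zero_mul, zero_mul, add_zero]
      _ = 0 := by rw [hp, mul_zero]
  exact (sub_eq_zero.mp he0).symm
end

section
/- In a UQ ring R, no two units sum to 1: for all u₁, u₂ ∈ U(R), u₁ + u₂ ≠ 1. -/
section

variable {R : Type*} [Ring R]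

/-- Testing `a` against its own inverse, which commutes with it, gives `1 - a a⁻¹ = 0`. -/
theorem IsQuasinilpotent.not_isUnit [Nontrivial R] {a : R} (ha : IsQuasinilpotent a) :
    ¬IsUnit a := by
  rintro ⟨v, rfl⟩
  have h := ha ↑v⁻¹ (by rw [Units.inv_mul, Units.mul_inv])
  rw [Units.mul_inv, sub_self] at h
  exact not_isUnit_zero h

theorem IsUQRing.isQuasinilpotent_sub_one (hR : IsUQRing R) {u : R} (hu : IsUnit u) :
    IsQuasinilpotent (u - 1) := by
  obtain ⟨q, hq, rfl⟩ := (hR u).mp hu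
  rwa [add_sub_cancel_left]

theorem IsUQRing.not_isUnit_sub_one [Nontrivial R] (hR : IsUQRing R) {u : R} (hu : IsUnit u) :
    ¬IsUnit (u - 1) :=
  (hR.isQuasinilpotent_sub_one hu).not_isUnit

end

theorem uq_no_two_units_sum_to_one {R : Type*} [Ring R] [Nontrivial R]
    (hR : IsUQRing R) (u₁ u₂ : R) (h₁ : IsUnit u₁) (h₂ : IsUnit u₂) :
    u₁ + u₂ ≠ 1 := by
  intro hsum
  have h : u₂ - 1 = -u₁ := by rw [← hsum]; abel
  exact hR.not_isUnit_sub_one h₂ (h ▸ h₁.neg)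
end
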